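/- For a (possibly infinite) matroid M, a minor N = M/C − D of M, and disjoint subsets X, Y ⊆ E(N), it holds that κ_N(X, Y) ≤ κ_M(X, Y). -/

import Mathlib

open Set Matroid

variable {α : Type*}

/-- A circuit of a (possibly infinite) matroid: a minimal dependent set. -/
def Circuit (M : Matroid α) (C : Set α) : Prop :=
  M.Dep C ∧ ∀ C' ⊂ C, ¬ M.Dep C'

/-- A cocircuit: a circuit of the dual matroid. -/
def Cocircuit (M : Matroid α) (D : Set α) : Prop :=
  Circuit M✶ D

/-- Deletion of the set `D` from the matroid `M`. -/
def delete (M : Matroid α) (D : Set α) : Matroid α :=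
  M ↾ (M.E \ D)

/-- Contraction of the set `C` in the matroid `M`, i.e. `M/C = (M✶ − C)✶`. -/
def contract (M : Matroid α) (C : Set α) : Matroid α :=
  (_root_.delete M✶ C)✶

/-- `del M I J` : the minimum cardinality of a finite `F ⊆ I ∪ J` with
`(I ∪ J) \ F` independent in `M`, or `∞` if no such finite set exists. -/
noncomputable def del (M : Matroid α) (I J : Set α) : ℕ∞ :=
  sInf {n : ℕ∞ | ∃ F : Set α, F.Finite ∧ F ⊆ I ∪ J ∧ M.Indep ((I ∪ J) \ F) ∧ n = F.encard}

/-- The connectivity function `κ_M(X)`, defined via `del` on bases of `M|X`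
and `M|(E \ X)` (its value does not depend on the choice of bases). -/
noncomputable def conn (M : Matroid α) (X : Set α) : ℕ∞ :=
  ⨅ B ∈ {B | (M ↾ X).IsBase B}, ⨅ B' ∈ {B' | (M ↾ (M.E \ X)).IsBase B'}, del M B B'

/-- `κ_M(X,Y) = min {κ_M(U) : X ⊆ U ⊆ E(M) \ Y}`. -/
noncomputable def connBtw (M : Matroid α) (X Y : Set α) : ℕ∞ :=
  ⨅ U ∈ {U | X ⊆ U ∧ U ⊆ M.E \ Y}, conn M U

/-- `x ~ y` iff `x = y` or some circuit contains both `x` and `y`. -/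
def ConnRel (M : Matroid α) (x y : α) : Prop :=
  x = y ∨ ∃ C, Circuit M C ∧ x ∈ C ∧ y ∈ C

/-! If `B`, `B'` are bases of `U` and `E \ U`, then `del M B B'` is the nullity of `B ∪ B'`,
which equals the nullity of `B'` in `M ／ U`; hence `κ_M(U)` is attained by every choice of the
two bases. To contract or delete a set `S ⊆ U`, take bases of the minor and extend them to bases
of `M`: nullity can only grow, so `κ_{M／S}(U \ S)` and `κ_{M＼S}(U \ S)` are at most `κ_M(U)`.
The part of `S` outside `U` is handled the same way through `κ_M(U) = κ_M(E \ U)`. Then every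
`U` separating `X` from `Y` in `M` gives the set `U \ (C ∪ D)` separating them in
`M ／ C ＼ D`. -/

noncomputable def nullity (M : Matroid α) (Z : Set α) : ℕ∞ :=
  sInf {n : ℕ∞ | ∃ F : Set α, F.Finite ∧ F ⊆ Z ∧ M.Indep (Z \ F) ∧ n = F.encard}

theorem del_eq_nullity (M : Matroid α) (I J : Set α) : del M I J = nullity M (I ∪ J) := rfl

namespace Matroid

theorem nullity_mono (M : Matroid α) {Z Z' : Set α} (h : Z ⊆ Z') :
    nullity M Z ≤ nullity M Z' := by
  refine le_sInf ?_
  rintro _ ⟨F, hF, hFZ, hind, rfl⟩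
  refine sInf_le_of_le ⟨F ∩ Z, hF.inter_of_left Z, inter_subset_right, ?_, rfl⟩
    (encard_le_encard inter_subset_left)
  rw [sdiff_inter_self_eq_sdiff]
  exact hind.subset (sdiff_subset_sdiff_left h)

theorem nullity_delete_of_disjoint (M : Matroid α) {Z D : Set α} (hZD : Disjoint Z D) :
    nullity (M ＼ D) Z = nullity M Z := by
  have hdisj (F : Set α) : Disjoint (Z \ F) D := hZD.mono_left sdiff_subset
  simp only [nullity, delete_indep_iff, hdisj, and_true]

section

variable {M : Matroid α} {Z V V' I C J U B B' : Set α}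

theorem IsBasis.encard_diff_eq (hV : M.IsBasis V Z) (hV' : M.IsBasis V' Z) :
    (Z \ V).encard = (Z \ V').encard :=
  hV.restrict_isBase.compl_isBase_dual.encard_eq_encard_of_isBase
    hV'.restrict_isBase.compl_isBase_dual

theorem IsBasis.nullity_eq (hV : M.IsBasis V Z) : nullity M Z = (Z \ V).encard := by
  refine le_antisymm ?_ (le_sInf ?_)
  · obtain hfin | hinf := (Z \ V).finite_or_infinite
    · refine sInf_le ⟨Z \ V, hfin, sdiff_subset, ?_, rfl⟩
      rw [sdiff_sdiff_cancel_left hV.subset]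
      exact hV.indep
    · simp [hinf.encard_eq]
  rintro _ ⟨F, -, -, hind, rfl⟩
  obtain ⟨V', hV', hZV'⟩ := hind.subset_isBasis_of_subset sdiff_subset hV.subset_ground
  rw [hV.encard_diff_eq hV']
  exact encard_le_encard fun x hx ↦ by_contra fun hxF ↦ hx.2 (hZV' ⟨hx.1, hxF⟩)

theorem IsBasis.nullity_contract (hI : M.IsBasis I C) (hZC : Disjoint Z C) (hZ : Z ⊆ M.E) :
    nullity (M ／ C) Z = nullity M (Z ∪ I) := by
  obtain ⟨V, hV⟩ := (M ／ C).exists_isBasis Z (subset_sdiff.2 ⟨hZ, hZC⟩)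
  have hVI : M.IsBasis (V ∪ I) (Z ∪ I) := by
    rw [hI.contract_eq_contract_delete] at hV
    exact hI.indep.union_isBasis_union_of_contract_isBasis hV.of_delete
  have hZI : Disjoint Z I := hZC.mono_right hI.subset
  rw [hV.nullity_eq, hVI.nullity_eq]
  congr 1
  tauto_set

theorem nullity_union_eq_of_isBasis (hB : M.IsBasis B U) (hB' : M.IsBasis B' U)
    (hJU : Disjoint J U) (hJ : J ⊆ M.E) : nullity M (J ∪ B) = nullity M (J ∪ B') := by
  rw [← hB.nullity_contract hJU hJ, hB'.nullity_contract hJU hJ]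

theorem IsBasis.conn_eq (hB : M.IsBasis B U) (hB' : M.IsBasis B' (M.E \ U)) :
    conn M U = nullity M (B ∪ B') := by
  have hU : U ⊆ M.E := hB.subset_ground
  refine le_antisymm (iInf₂_le_of_le B hB.restrict_isBase (iInf₂_le B' hB'.restrict_isBase)) ?_
  refine le_iInf₂ fun B₀ hB₀ ↦ le_iInf₂ fun B₀' hB₀' ↦ ?_
  rw [mem_ofPred_eq, isBase_restrict_iff] at hB₀ hB₀'
  have hB'U : Disjoint B' U := disjoint_sdiff_left.mono_left hB'.subset
  have hB₀U : Disjoint B₀ (M.E \ U) := disjoint_sdiff_right.mono_left hB₀.subset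
  rw [del_eq_nullity, union_comm B,
    nullity_union_eq_of_isBasis hB hB₀ hB'U hB'.indep.subset_ground, union_comm,
    nullity_union_eq_of_isBasis hB' hB₀' hB₀U hB₀.indep.subset_ground]

end

theorem conn_compl (M : Matroid α) {U : Set α} (hU : U ⊆ M.E) :
    conn M (M.E \ U) = conn M U := by
  obtain ⟨B, hB⟩ := M.exists_isBasis U
  obtain ⟨B', hB'⟩ := M.exists_isBasis (M.E \ U)
  rw [hB.conn_eq hB', hB'.conn_eq (by rwa [sdiff_sdiff_cancel_left hU]), union_comm]

theorem conn_delete_le_of_subset (M : Matroid α) {U D : Set α} (hU : U ⊆ M.E)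
    (hDU : D ⊆ U) :
    conn (M ＼ D) (U \ D) ≤ conn M U := by
  obtain ⟨J, hJ⟩ := M.exists_isBasis (U \ D) (sdiff_subset.trans hU)
  obtain ⟨J', hJ'⟩ := M.exists_isBasis (M.E \ U)
  obtain ⟨B, hB, hJB⟩ := hJ.indep.subset_isBasis_of_subset (hJ.subset.trans sdiff_subset) hU
  have hground : (M ＼ D).E \ (U \ D) = M.E \ U := by
    rw [delete_ground]; tauto_set
  have hJ'D : Disjoint (J ∪ J') D :=
    disjoint_union_left.2 ⟨disjoint_sdiff_left.mono_left hJ.subset,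
      (disjoint_sdiff_left.mono_right hDU).mono_left hJ'.subset⟩
  calc conn (M ＼ D) (U \ D) = nullity (M ＼ D) (J ∪ J') :=
        (hJ.delete disjoint_sdiff_left).conn_eq (by
          rw [hground]; exact hJ'.delete (disjoint_sdiff_left.mono_right hDU))
    _ = nullity M (J ∪ J') := nullity_delete_of_disjoint M hJ'D
    _ ≤ nullity M (B ∪ J') := nullity_mono M (union_subset_union_left _ hJB)
    _ = conn M U := (hB.conn_eq hJ').symm

theorem conn_contract_le_of_subset (M : Matroid α) {U C : Set α} (hU : U ⊆ M.E)
    (hCU : C ⊆ U) :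
    conn (M ／ C) (U \ C) ≤ conn M U := by
  obtain ⟨I, hI⟩ := M.exists_isBasis C (hCU.trans hU)
  have hground : (M ／ C).E \ (U \ C) = M.E \ U := by
    rw [contract_ground]; tauto_set
  obtain ⟨J, hJ⟩ := (M ／ C).exists_isBasis (U \ C) (sdiff_subset_sdiff_left hU)
  obtain ⟨J', hJ'⟩ := (M ／ C).exists_isBasis (M.E \ U) (hground ▸ sdiff_subset)
  have hJI : M.Indep (J ∪ I) := (hI.contract_indep_iff.1 hJ.indep).1
  obtain ⟨B, hB, hJIB⟩ := hJI.subset_isBasis_of_subset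
    (union_subset (hJ.subset.trans sdiff_subset) (hI.subset.trans hCU)) hU
  obtain ⟨B', hB', hJ'B'⟩ := hJ'.indep.of_contract.subset_isBasis_of_subset hJ'.subset
  have hJJ'C : Disjoint (J ∪ J') C :=
    disjoint_union_left.2 ⟨disjoint_sdiff_left.mono_left hJ.subset,
      (disjoint_sdiff_left.mono_right hCU).mono_left hJ'.subset⟩
  calc conn (M ／ C) (U \ C) = nullity (M ／ C) (J ∪ J') := hJ.conn_eq (hground ▸ hJ')
    _ = nullity M (J ∪ J' ∪ I) := hI.nullity_contract hJJ'C
          (union_subset hJ.indep.of_contract.subset_ground hJ'.indep.of_contract.subset_ground)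
    _ ≤ nullity M (B ∪ B') := nullity_mono M (by
          rw [union_right_comm]; exact union_subset_union hJIB hJ'B')
    _ = conn M U := (hB.conn_eq hB').symm

theorem conn_contract_le (M : Matroid α) {U : Set α} (hU : U ⊆ M.E) (C : Set α) :
    conn (M ／ C) (U \ C) ≤ conn M U := by
  wlog hC : C ⊆ M.E generalizing C
  · have hUC : U \ (C ∩ M.E) = U \ C := by tauto_set
    simpa only [contract_inter_ground_eq, hUC] using this (C ∩ M.E) inter_subset_right
  set N := M ／ (C ∩ U)
  have hN : M ／ C = N ／ (C \ U) := by rw [contract_contract, inter_union_sdiff]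
  have hNE : N.E = M.E \ (C ∩ U) := rfl
  calc conn (M ／ C) (U \ C) = conn (N ／ (C \ U)) ((N.E \ (U \ C)) \ (C \ U)) := by
        rw [hN, ← conn_compl _ (by rw [contract_ground, hNE]; tauto_set), contract_ground]
        congr 1; tauto_set
    _ ≤ conn N (N.E \ (U \ C)) := conn_contract_le_of_subset N sdiff_subset (by tauto_set)
    _ = conn N (U \ C) := conn_compl N (by tauto_set)
    _ = conn N (U \ (C ∩ U)) := by rw [sdiff_inter_self_eq_sdiff]
    _ ≤ conn M U := conn_contract_le_of_subset M hU inter_subset_right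

theorem conn_delete_le (M : Matroid α) {U : Set α} (hU : U ⊆ M.E) (D : Set α) :
    conn (M ＼ D) (U \ D) ≤ conn M U := by
  wlog hD : D ⊆ M.E generalizing D
  · have hUD : U \ (D ∩ M.E) = U \ D := by tauto_set
    simpa only [delete_inter_ground_eq, hUD] using this (D ∩ M.E) inter_subset_right
  set N := M ＼ (D ∩ U)
  have hN : M ＼ D = N ＼ (D \ U) := by rw [delete_delete, inter_union_sdiff]
  have hNE : N.E = M.E \ (D ∩ U) := rfl
  calc conn (M ＼ D) (U \ D) = conn (N ＼ (D \ U)) ((N.E \ (U \ D)) \ (D \ U)) := by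
        rw [hN, ← conn_compl _ (by rw [delete_ground, hNE]; tauto_set), delete_ground]
        congr 1; tauto_set
    _ ≤ conn N (N.E \ (U \ D)) := conn_delete_le_of_subset N sdiff_subset (by tauto_set)
    _ = conn N (U \ D) := conn_compl N (by tauto_set)
    _ = conn N (U \ (D ∩ U)) := by rw [sdiff_inter_self_eq_sdiff]
    _ ≤ conn M U := conn_delete_le_of_subset M hU inter_subset_right

end Matroid

theorem connBtw_le_conn (M : Matroid α) {X Y U : Set α} (hXU : X ⊆ U) (hUY : U ⊆ M.E \ Y) :
    connBtw M X Y ≤ conn M U :=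
  iInf₂_le U ⟨hXU, hUY⟩

theorem stmt17_general (M : Matroid α) (X Y C D : Set α)
    (hC : C ⊆ M.E \ (X ∪ Y)) (hD : D ⊆ M.E \ (X ∪ Y)) :
    connBtw (_root_.delete (_root_.contract M C) D) X Y ≤ connBtw M X Y := by
  refine le_iInf₂ fun U ⟨hXU, hUY⟩ ↦ ?_
  have hU : U ⊆ M.E := hUY.trans sdiff_subset
  have hXU' : X ⊆ (U \ C) \ D := by tauto_set
  have hUY' : (U \ C) \ D ⊆ (M ／ C ＼ D).E \ Y := by
    rw [delete_ground, contract_ground]; tauto_set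
  calc connBtw (M ／ C ＼ D) X Y ≤ conn (M ／ C ＼ D) ((U \ C) \ D) :=
        connBtw_le_conn _ hXU' hUY'
    _ ≤ conn (M ／ C) (U \ C) := conn_delete_le _ (sdiff_subset_sdiff_left hU) D
    _ ≤ conn M U := conn_contract_le M hU C

theorem stmt17 (M : Matroid α) (X Y C D : Set α)
    (hX : X ⊆ M.E) (hY : Y ⊆ M.E) (hXY : Disjoint X Y)
    (hC : C ⊆ M.E \ (X ∪ Y)) (hD : D ⊆ M.E \ (X ∪ Y)) (hCD : Disjoint C D) :
    connBtw (_root_.delete (_root_.contract M C) D) X Y ≤ connBtw M X Y :=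
  stmt17_general M X Y C D hC hD
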